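/- For all positive reals a ≠ b, λ_5(a,b) ≤ S(a,b), where λ_5(a,b) = (2/3)·(a⁶+b⁶-2((a+b)/2)⁶)/(a⁵+b⁵-2((a+b)/2)⁵) and S(a,b) = a^{a/(a+b)}·b^{b/(a+b)}. -/

import Mathlib

/-!
Write `a = s (1 - t)`, `b = s (1 + t)` with `s = (a + b) / 2` and `0 < |t| < 1`. Then
`λ₅ = s · (2/15) (15 + 15t² + t⁴) / (2 + t²) ≤ s (1 + t²/4)² ≤ s · exp (t²/2)`, while
`S = s · exp (φ t / 2)` with `φ t = (1 + t) log (1 + t) + (1 - t) log (1 - t)`. So it suffices that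
`t² ≤ φ t`: both sides are even, and on `[0, 1)` their difference increases because
`φ' t = log (1 + t) - log (1 - t) = 2 artanh t ≥ 2t`.
-/

open Real Set

lemma two_mul_le_log_one_add_sub_log_one_sub {t : ℝ} (ht₀ : 0 ≤ t) (ht₁ : t < 1) :
    2 * t ≤ log (1 + t) - log (1 - t) := by
  have hsum := hasSum_log_sub_log_of_abs_lt_one (abs_lt.2 ⟨by linarith, ht₁⟩)
  simpa using le_hasSum hsum 0 fun k _ => by positivity

lemma hasDerivAt_mul_log_one_add_add_mul_log_one_sub {x : ℝ} (hx : x ∈ Ioo (-1) 1) :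
    HasDerivAt (fun x => (1 + x) * log (1 + x) + (1 - x) * log (1 - x))
      (log (1 + x) - log (1 - x)) x := by
  have hplus : HasDerivAt (fun x => 1 + x) 1 x := (hasDerivAt_id x).const_add 1
  have hminus : HasDerivAt (fun x => 1 - x) (-1) x := by
    simpa using (hasDerivAt_id x).const_sub 1
  refine ((hplus.mul (hplus.log ?_)).add (hminus.mul (hminus.log ?_))).congr_deriv ?_
  · linarith [hx.1]
  · linarith [hx.2]
  · field_simp [show 1 + x ≠ 0 by linarith [hx.1], show 1 - x ≠ 0 by linarith [hx.2]]
    ring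

lemma sq_le_mul_log_one_add_add_mul_log_one_sub {t : ℝ} (ht₀ : 0 ≤ t) (ht₁ : t < 1) :
    t ^ 2 ≤ (1 + t) * log (1 + t) + (1 - t) * log (1 - t) := by
  have hderiv : ∀ x ∈ Ico (0 : ℝ) 1, HasDerivAt
      (fun x => (1 + x) * log (1 + x) + (1 - x) * log (1 - x) - x ^ 2)
      (log (1 + x) - log (1 - x) - 2 * x) x := fun x hx =>
    ((hasDerivAt_mul_log_one_add_add_mul_log_one_sub ⟨by linarith [hx.1], hx.2⟩).sub
      (hasDerivAt_pow 2 x)).congr_deriv (by norm_num)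
  have hmono := monotoneOn_of_hasDerivWithinAt_nonneg (convex_Ico 0 1)
    (fun x hx => (hderiv x hx).continuousAt.continuousWithinAt)
    (fun x hx => (hderiv x (interior_subset hx)).hasDerivWithinAt)
    (fun x hx => by
      rw [interior_Ico] at hx
      linarith [two_mul_le_log_one_add_sub_log_one_sub hx.1.le hx.2])
  have := hmono ⟨le_rfl, one_pos⟩ ⟨ht₀, ht₁⟩ ht₀
  simp only [add_zero, sub_zero, log_one, mul_zero, zero_pow two_ne_zero] at this
  linarith

lemma sq_le_mul_log_one_add_add_mul_log_one_sub_of_abs_lt_one {t : ℝ} (ht : |t| < 1) :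
    t ^ 2 ≤ (1 + t) * log (1 + t) + (1 - t) * log (1 - t) := by
  rcases le_total 0 t with h | h
  · exact sq_le_mul_log_one_add_add_mul_log_one_sub h (abs_lt.1 ht).2
  · have := sq_le_mul_log_one_add_add_mul_log_one_sub (neg_nonneg.2 h) (by linarith [abs_lt.1 ht])
    rw [neg_sq, ← sub_eq_add_neg, sub_neg_eq_add] at this
    linarith

lemma lambda5_mul_one_sub_mul_one_add {s t : ℝ} (hs : s ≠ 0) (ht : t ≠ 0) :
    (2 / 3 : ℝ) *
        (((s * (1 - t)) ^ 6 + (s * (1 + t)) ^ 6 - 2 * ((s * (1 - t) + s * (1 + t)) / 2) ^ 6) /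
          ((s * (1 - t)) ^ 5 + (s * (1 + t)) ^ 5 - 2 * ((s * (1 - t) + s * (1 + t)) / 2) ^ 5)) =
      s * (2 / 15 * (15 + 15 * t ^ 2 + t ^ 4) / (2 + t ^ 2)) := by
  rw [show (s * (1 - t)) ^ 6 + (s * (1 + t)) ^ 6 - 2 * ((s * (1 - t) + s * (1 + t)) / 2) ^ 6 =
      2 * s ^ 6 * t ^ 2 * (15 + 15 * t ^ 2 + t ^ 4) by ring,
    show (s * (1 - t)) ^ 5 + (s * (1 + t)) ^ 5 - 2 * ((s * (1 - t) + s * (1 + t)) / 2) ^ 5 =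
      10 * s ^ 5 * t ^ 2 * (2 + t ^ 2) by ring]
  have : 2 + t ^ 2 ≠ 0 := by positivity
  field_simp
  ring

lemma gini_mean_mul_one_sub_mul_one_add {s t : ℝ} (hs : 0 < s) (ht : |t| < 1) :
    (s * (1 - t)) ^ (s * (1 - t) / (s * (1 - t) + s * (1 + t))) *
        (s * (1 + t)) ^ (s * (1 + t) / (s * (1 - t) + s * (1 + t))) =
      s * exp (((1 + t) * log (1 + t) + (1 - t) * log (1 - t)) / 2) := by
  obtain ⟨ht₀, ht₁⟩ := abs_lt.1 ht
  have hminus : 0 < 1 - t := by linarith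
  have hplus : 0 < 1 + t := by linarith
  rw [rpow_def_of_pos (by positivity), rpow_def_of_pos (by positivity), ← exp_add,
    log_mul hs.ne' hminus.ne', log_mul hs.ne' hplus.ne']
  rw [show (log s + log (1 - t)) * (s * (1 - t) / (s * (1 - t) + s * (1 + t))) +
      (log s + log (1 + t)) * (s * (1 + t) / (s * (1 - t) + s * (1 + t))) =
      log s + ((1 + t) * log (1 + t) + (1 - t) * log (1 - t)) / 2 by field_simp; ring,
    exp_add, exp_log hs]

lemma lambda5_ratio_le_exp (t : ℝ) :
    2 / 15 * (15 + 15 * t ^ 2 + t ^ 4) / (2 + t ^ 2) ≤ exp (t ^ 2 / 2) :=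
  calc 2 / 15 * (15 + 15 * t ^ 2 + t ^ 4) / (2 + t ^ 2)
      ≤ (1 + t ^ 2 / 4) ^ 2 := by
        rw [div_le_iff₀ (by positivity)]
        nlinarith [pow_nonneg (sq_nonneg t) 2, pow_nonneg (sq_nonneg t) 3]
    _ ≤ exp (t ^ 2 / 4) ^ 2 := by
        gcongr
        linarith [add_one_le_exp (t ^ 2 / 4)]
    _ = exp (t ^ 2 / 2) := by rw [← exp_nat_mul]; ring_nf

lemma lambda5_le_gini_mean_mul_one_sub_mul_one_add {s t : ℝ} (hs : 0 < s) (ht₀ : t ≠ 0)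
    (ht : |t| < 1) :
    (2 / 3 : ℝ) *
        (((s * (1 - t)) ^ 6 + (s * (1 + t)) ^ 6 - 2 * ((s * (1 - t) + s * (1 + t)) / 2) ^ 6) /
          ((s * (1 - t)) ^ 5 + (s * (1 + t)) ^ 5 - 2 * ((s * (1 - t) + s * (1 + t)) / 2) ^ 5)) ≤
      (s * (1 - t)) ^ (s * (1 - t) / (s * (1 - t) + s * (1 + t))) *
        (s * (1 + t)) ^ (s * (1 + t) / (s * (1 - t) + s * (1 + t))) := by
  rw [lambda5_mul_one_sub_mul_one_add hs.ne' ht₀, gini_mean_mul_one_sub_mul_one_add hs ht]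
  gcongr
  calc 2 / 15 * (15 + 15 * t ^ 2 + t ^ 4) / (2 + t ^ 2) ≤ exp (t ^ 2 / 2) :=
        lambda5_ratio_le_exp t
    _ ≤ _ := by
        gcongr
        exact sq_le_mul_log_one_add_add_mul_log_one_sub_of_abs_lt_one ht

theorem stmt15 (a b : ℝ) (ha : 0 < a) (hb : 0 < b) (hab : a ≠ b) :
    (2 / 3 : ℝ) *
        ((a ^ 6 + b ^ 6 - 2 * ((a + b) / 2) ^ 6) /
          (a ^ 5 + b ^ 5 - 2 * ((a + b) / 2) ^ 5)) ≤
      a ^ (a / (a + b)) * b ^ (b / (a + b)) := by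
  have hsum : 0 < a + b := by positivity
  obtain ⟨s, t, hs, ht₀, ht, rfl, rfl⟩ :
      ∃ s t : ℝ, 0 < s ∧ t ≠ 0 ∧ |t| < 1 ∧ a = s * (1 - t) ∧ b = s * (1 + t) := by
    refine ⟨(a + b) / 2, (b - a) / (a + b), by positivity,
      div_ne_zero (sub_ne_zero.2 hab.symm) hsum.ne', ?_, by field_simp; ring,
      by field_simp; ring⟩
    rw [abs_div, abs_of_pos hsum, div_lt_one hsum, abs_sub_lt_iff]
    constructor <;> linarith
  exact lambda5_le_gini_mean_mul_one_sub_mul_one_add hs ht₀ ht
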